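/- arXiv:0712.3021 — 4 statements merged into one kernel-verified Lean document; each statement's English description precedes it below -/
import Mathlib

section
/- (Pointwise/fiberwise form of Theorem 4.5: unimodular extensions.) Let 0 → c → g → b → 0 be an extension of finite-dimensional real Lie algebras, i.e. c is a Lie ideal of g, b = g/c, and Φ : g → b is the quotient homomorphism. Assume c is unimodular, that is, tr(ad_c k) = 0 for every k ∈ c. Then there exists a linear functional η : b → ℝ such that η(Φ X) = tr((ad_g X)|_c) for every X ∈ g (so the character of the adjoint action of g on the top exterior power of c descends to b), and the relative modular cocycle of Φ satisfies tr(ad_g X) − tr(ad_b(Φ X)) = η(Φ X) for all X ∈ g. -/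
/-!
Since `c` is `ad_g`-invariant, `ad_g X` is block upper triangular with respect to `c ⊆ g`, with
diagonal blocks `(ad_g X)|_c` and `ad_b (Φ X)`, so
`tr (ad_g X) = tr ((ad_g X)|_c) + tr (ad_b (Φ X))`.
The character `X ↦ tr ((ad_g X)|_c)` restricts on `c` to `k ↦ tr (ad_c k)`, which vanishes by
unimodularity, so it factors through `b = g ⧸ c`.
-/

open LinearMap Module LieModule

theorem LinearMap.trace_eq_trace_restrict_add_trace_mapQ
    {R V : Type*} [CommRing R] [AddCommGroup V] [Module R V]
    (W : Submodule R V) [Module.Free R W] [Module.Finite R W]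
    [Module.Free R (V ⧸ W)] [Module.Finite R (V ⧸ W)]
    (f : V →ₗ[R] V) (hf : W ≤ W.comap f) :
    trace R V f = trace R W (f.restrict hf) + trace R (V ⧸ W) (W.mapQ W f hf) := by
  -- in a basis of `W` extended by lifts of a basis of `V ⧸ W`, the diagonal of `f` is that of
  -- `f.restrict hf` followed by that of `W.mapQ W f hf`
  let bW := Free.chooseBasis R W
  let bQ := Free.chooseBasis R (V ⧸ W)
  rw [trace_eq_matrix_trace R (bW.sumQuot bQ), trace_eq_matrix_trace R bW,
    trace_eq_matrix_trace R bQ, Matrix.trace, Matrix.trace, Matrix.trace, Fintype.sum_sum_type]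
  congr 1
  · refine Finset.sum_congr rfl fun i _ => ?_
    simp only [Matrix.diag_apply, toMatrix_apply, Basis.sumQuot_inl]
    exact bW.sumQuot_repr_inl bQ (f.restrict hf (bW i)) i
  · refine Finset.sum_congr rfl fun j _ => ?_
    simp only [Matrix.diag_apply, toMatrix_apply, Basis.sumQuot_repr_inr, Submodule.mkQ_apply]
    rw [← bW.sumQuot_inr bQ j, Submodule.mapQ_apply]

namespace LieSubmodule

variable {R L M : Type*} [CommRing R] [LieRing L] [LieAlgebra R L]
  [AddCommGroup M] [Module R M] [LieRingModule L M] [LieModule R L M]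

theorem trace_toEnd_eq_trace_toEnd_add_trace_toEnd_quotient (N : LieSubmodule R L M)
    [Module.Free R N] [Module.Finite R N] [Module.Free R (M ⧸ N)] [Module.Finite R (M ⧸ N)]
    (x : L) :
    trace R M (toEnd R L M x) =
      trace R N (toEnd R L N x) + trace R (M ⧸ N) (toEnd R L (M ⧸ N) x) :=
  (toEnd R L M x).trace_eq_trace_restrict_add_trace_mapQ (N : Submodule R M) fun _ => N.lie_mem

end LieSubmodule

namespace LieIdeal

variable {R L : Type*} [CommRing R] [LieRing L] [LieAlgebra R L]

theorem trace_toEnd_eq_zero_of_mem (I : LieIdeal R L)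
    (hI : ∀ k : I, trace R I (LieAlgebra.ad R I k) = 0) {x : L} (hx : x ∈ I) :
    trace R I (toEnd R L I x) = 0 :=
  hI ⟨x, hx⟩

theorem toEnd_quotient_eq_ad_mk (I : LieIdeal R L) (x : L) :
    toEnd R L (L ⧸ I) x = LieAlgebra.ad R (L ⧸ I) (LieSubmodule.Quotient.mk' I x) :=
  Submodule.linearMap_qext _ rfl

end LieIdeal

/-- Pointwise form of Theorem 4.5 (unimodular extensions): for an extension
`0 → c → g → b → 0` of finite-dimensional real Lie algebras with `c` unimodular and
`b = g ⧸ c`, the character `X ↦ tr ((ad_g X)|_c)` descends to a linear functional `η` on `b`,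
and the relative modular cocycle of the projection `Φ` equals `η ∘ Φ`. -/
theorem unimodular_extension_relative_modular_cocycle
    (g : Type*) [LieRing g] [LieAlgebra ℝ g] [Module.Finite ℝ g]
    (c : LieIdeal ℝ g)
    (hc : ∀ k : c, LinearMap.trace ℝ c (LieAlgebra.ad ℝ c k) = 0) :
    ∃ η : (g ⧸ c) →ₗ[ℝ] ℝ,
      (∀ X : g, η (LieSubmodule.Quotient.mk' c X) =
        LinearMap.trace ℝ (c : Submodule ℝ g)
          ((LieAlgebra.ad ℝ g X).restrict
            (fun y hy => by simpa using c.lie_mem hy :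
              ∀ y ∈ (c : Submodule ℝ g),
                (LieAlgebra.ad ℝ g X) y ∈ (c : Submodule ℝ g)))) ∧
      (∀ X : g,
        LinearMap.trace ℝ g (LieAlgebra.ad ℝ g X) -
          LinearMap.trace ℝ (g ⧸ c)
            (LieAlgebra.ad ℝ (g ⧸ c) (LieSubmodule.Quotient.mk' c X)) =
        η (LieSubmodule.Quotient.mk' c X)) := by
  let θ : g →ₗ[ℝ] ℝ := trace ℝ c ∘ₗ (toEnd ℝ g c : g →ₗ[ℝ] Module.End ℝ c)
  refine ⟨(c : Submodule ℝ g).liftQ θ fun x hx => c.trace_toEnd_eq_zero_of_mem hc hx,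
    fun X => rfl, fun X => ?_⟩
  rw [← c.toEnd_quotient_eq_ad_mk, sub_eq_iff_eq_add]
  exact c.trace_toEnd_eq_trace_toEnd_add_trace_toEnd_quotient X
end

section
/- Let 0 → V₁ →ⁱ V₂ →ᵖ V₃ → 0 be a short exact sequence of finite-dimensional real vector spaces (i injective, p surjective, range i = ker p), and set k = dim V₁ and r = dim V₃. If ω ∈ ⋀ᵏ V₁ and z ∈ ⋀ʳ V₂ satisfies (⋀ʳ p)(z) = 0, then (⋀ᵏ i)(ω) ∧ z = 0 in ⋀^{k+r} V₂. (This is the well-definedness of the canonical map X ⊗ Y ↦ i(X) ∧ Ỹ, independent of the choice of lift Ỹ of Y.) -/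
open ExteriorAlgebra

/-- Any element of a `(k+1)`-st exterior power with `k = finrank` is zero. -/
private lemma exteriorPower_succ_finrank_eq_zero
    {V : Type*} [AddCommGroup V] [Module ℝ V] [FiniteDimensional ℝ V]
    {y : ExteriorAlgebra ℝ V} (hy : y ∈ ⋀[ℝ]^(Module.finrank ℝ V + 1) V) : y = 0 := by
  rw [← ιMulti_span_fixedDegree] at hy
  refine (Submodule.span_le (p := ⊥)).2 ?_ hy
  rintro _ ⟨v, rfl⟩
  simp only [Submodule.bot_coe, Set.mem_singleton_iff]
  refine (ιMulti ℝ _).map_linearDependent v fun hv => ?_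
  have := hv.fintype_card_le_finrank
  simp at this

/-- An element `ι v` can be moved to the left of any element of the exterior algebra. -/
private lemma exists_mul_ι_eq
    {V : Type*} [AddCommGroup V] [Module ℝ V] (v : V) (a : ExteriorAlgebra ℝ V) :
    ∃ b, a * ι ℝ v = ι ℝ v * b := by
  induction a using ExteriorAlgebra.induction with
  | algebraMap r => exact ⟨algebraMap ℝ _ r, Algebra.commutes r (ι ℝ v)⟩
  | ι w =>
    refine ⟨-ι ℝ w, ?_⟩
    have h := ι_add_mul_swap (R := ℝ) w v
    rw [mul_neg, eq_neg_of_add_eq_zero_left h]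
  | mul x y hx hy =>
    obtain ⟨b, hb⟩ := hy
    obtain ⟨c, hc⟩ := hx
    exact ⟨c * b, by rw [mul_assoc, hb, ← mul_assoc, hc, mul_assoc]⟩
  | add x y hx hy =>
    obtain ⟨b, hb⟩ := hx
    obtain ⟨c, hc⟩ := hy
    exact ⟨b + c, by rw [add_mul, hb, hc, mul_add]⟩

/-- Well-definedness of the canonical map for a short exact sequence
`0 → V₁ → V₂ → V₃ → 0` of finite-dimensional real vector spaces: if `ω ∈ ⋀ᵏ V₁`
(`k = dim V₁`) and `z ∈ ⋀ʳ V₂` (`r = dim V₃`) satisfies `(⋀ʳ p) z = 0`, then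
`(⋀ᵏ i) ω ∧ z = 0`. Wedge products are computed as products in the exterior algebra. -/
theorem wedge_eq_zero_of_map_top_exterior_eq_zero
    {V₁ V₂ V₃ : Type*}
    [AddCommGroup V₁] [Module ℝ V₁] [FiniteDimensional ℝ V₁]
    [AddCommGroup V₂] [Module ℝ V₂] [FiniteDimensional ℝ V₂]
    [AddCommGroup V₃] [Module ℝ V₃] [FiniteDimensional ℝ V₃]
    (i : V₁ →ₗ[ℝ] V₂) (p : V₂ →ₗ[ℝ] V₃)
    (hi : Function.Injective i) (hp : Function.Surjective p)
    (hexact : LinearMap.range i = LinearMap.ker p)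
    (k r : ℕ) (hk : k = Module.finrank ℝ V₁) (hr : r = Module.finrank ℝ V₃)
    (ω : ⋀[ℝ]^k V₁) (z : ⋀[ℝ]^r V₂)
    (hz : ExteriorAlgebra.map p (z : ExteriorAlgebra ℝ V₂) = 0) :
    ExteriorAlgebra.map i (ω : ExteriorAlgebra ℝ V₁) * (z : ExteriorAlgebra ℝ V₂) = 0 := by
  -- a linear section `s` of `p`
  obtain ⟨s, hs⟩ := p.exists_rightInverse_of_surjective (LinearMap.range_eq_top.2 hp)
  set q : V₂ →ₗ[ℝ] V₂ := s ∘ₗ p with hq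
  set Ω : ExteriorAlgebra ℝ V₂ := ExteriorAlgebra.map i (ω : ExteriorAlgebra ℝ V₁) with hΩ
  -- `Ω * ι (i x) = 0` since `⋀^(k+1) V₁ = 0`
  have key : ∀ x : V₁, Ω * ι ℝ (i x) = 0 := by
    intro x
    have h1 : (ω : ExteriorAlgebra ℝ V₁) * ι ℝ x = 0 := by
      apply exteriorPower_succ_finrank_eq_zero
      rw [← hk]
      have h1 : ι ℝ x ∈ ⋀[ℝ]^1 V₁ := by
        show ι ℝ x ∈ LinearMap.range (ι ℝ (M := V₁)) ^ 1
        rw [pow_one]; exact LinearMap.mem_range_self _ _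
      exact SetLike.mul_mem_graded ω.2 h1
    rw [hΩ, ← map_apply_ι i x, ← map_mul, h1, map_zero]
  -- every element of the kernel of `q - id` pointwise lands in `range i`
  have hker : ∀ v : V₂, ∃ x : V₁, v - q v = i x := by
    intro v
    have : v - q v ∈ LinearMap.ker p := by
      simp only [LinearMap.mem_ker, map_sub, hq, LinearMap.comp_apply]
      have : p (s (p v)) = p v := congrFun (congrArg DFunLike.coe hs) (p v)
      simp [this]
    rw [← hexact] at this
    obtain ⟨x, hx⟩ := this
    exact ⟨x, hx.symm⟩
  -- main induction: `Ω` annihilates `c * (a - map q a)` for all `a, c`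
  have main : ∀ a : ExteriorAlgebra ℝ V₂, ∀ c : ExteriorAlgebra ℝ V₂,
      Ω * (c * (a - ExteriorAlgebra.map q a)) = 0 := by
    intro a
    induction a using ExteriorAlgebra.induction with
    | algebraMap t => intro c; simp
    | ι v =>
      intro c
      obtain ⟨x, hx⟩ := hker v
      have : ι ℝ v - ExteriorAlgebra.map q (ι ℝ v) = ι ℝ (i x) := by
        rw [map_apply_ι, ← map_sub, hx]
      rw [this]
      obtain ⟨b, hb⟩ := exists_mul_ι_eq (i x) c
      rw [hb, ← mul_assoc, key x, zero_mul]
    | mul x y hx hy =>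
      intro c
      have expand : c * (x * y - ExteriorAlgebra.map q (x * y)) =
          (c * x) * (y - ExteriorAlgebra.map q y) +
          (c * (x - ExteriorAlgebra.map q x)) * (ExteriorAlgebra.map q y) := by
        rw [map_mul]; noncomm_ring
      rw [expand, mul_add, hy (c * x), ← mul_assoc, hx c, zero_mul, add_zero]
    | add x y hx hy =>
      intro c
      have expand : c * (x + y - ExteriorAlgebra.map q (x + y)) =
          c * (x - ExteriorAlgebra.map q x) + c * (y - ExteriorAlgebra.map q y) := by
        rw [map_add]; noncomm_ring
      rw [expand, mul_add, hx c, hy c, add_zero]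
  have hz0 : ExteriorAlgebra.map q (z : ExteriorAlgebra ℝ V₂) = 0 := by
    rw [hq, ← map_comp_map, AlgHom.comp_apply, hz, map_zero]
  have := main (z : ExteriorAlgebra ℝ V₂) 1
  rwa [hz0, sub_zero, one_mul] at this
end

section
/- (Canonical top-exterior-power isomorphism for a short exact sequence.) Let 0 → V₁ →ⁱ V₂ →ᵖ V₃ → 0 be a short exact sequence of finite-dimensional real vector spaces, and set k = dim V₁ and r = dim V₃. Then there exists a linear equivalence e : (⋀ᵏ V₁) ⊗ (⋀ʳ V₃) ≅ ⋀^{k+r} V₂ such that e(ω ⊗ (⋀ʳ p)(σ)) = (⋀ᵏ i)(ω) ∧ σ for all ω ∈ ⋀ᵏ V₁ and σ ∈ ⋀ʳ V₂. In particular ⋀^{top} V₁ ⊗ ⋀^{top} V₃ is canonically isomorphic to ⋀^{top} V₂. -/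
/-!
Choose a linear section `s` of `p`. The map `ω ⊗ τ ↦ (⋀ᵏ i) ω ∧ (⋀ʳ s) τ` goes between two
one-dimensional spaces and sends the wedge of bases `b₁` of `V₁` and `b₃` of `V₃` to the wedge of
the basis `(i ∘ b₁, s ∘ b₃)` of `V₂`, so it is an isomorphism. To evaluate it on
`ω ⊗ (⋀ʳ p) σ`, note that `s ∘ p` differs from the identity by vectors of `i V₁`, and that
`(⋀ᵏ i) ω` is killed by wedging with any such vector because `⋀^{k+1} V₁ = 0`; hence
`(⋀ᵏ i) ω ∧ ⋀ʳ (s ∘ p) σ = (⋀ᵏ i) ω ∧ σ`.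
-/

open TensorProduct

open Module

theorem Function.Exact.exists_basis_coe_eq_append {R V₁ V₂ V₃ : Type*} [Ring R]
    [AddCommGroup V₁] [Module R V₁] [AddCommGroup V₂] [Module R V₂]
    [AddCommGroup V₃] [Module R V₃] {i : V₁ →ₗ[R] V₂} {p : V₂ →ₗ[R] V₃}
    (h : Function.Exact i p) (hi : Function.Injective i) {s : V₃ →ₗ[R] V₂}
    (hs : p ∘ₗ s = .id) {k r : ℕ} (b₁ : Basis (Fin k) R V₁) (b₃ : Basis (Fin r) R V₃) :
    ∃ b : Basis (Fin (k + r)) R V₂, ⇑b = Fin.append (i ∘ b₁) (s ∘ b₃) := by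
  let e := (h.splitSurjectiveEquiv hi ⟨s, hs⟩).1
  have he : ∀ x y, e.symm (x, y) = i x + s y := fun x y => rfl
  refine ⟨((b₁.prod b₃).map e.symm).reindex finSumFinEquiv, funext fun j => ?_⟩
  refine Fin.addCases (fun j => ?_) (fun j => ?_) j <;> simp [he]

theorem LinearMap.bijective_of_ne_zero_of_finrank_eq_one {K V W : Type*} [Field K]
    [AddCommGroup V] [Module K V] [FiniteDimensional K V]
    [AddCommGroup W] [Module K W] [FiniteDimensional K W]
    (hV : finrank K V = 1) (hW : finrank K W = 1) {f : V →ₗ[K] W} (hf : f ≠ 0) :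
    Function.Bijective f := by
  have hsurj : Function.Surjective f := by
    rw [← LinearMap.range_eq_top]
    apply Submodule.eq_top_of_finrank_eq
    have := Submodule.one_le_finrank_iff.2 (mt LinearMap.range_eq_bot.1 hf)
    have := Submodule.finrank_le (LinearMap.range f)
    omega
  exact ⟨(injective_iff_surjective_of_finrank_eq_finrank (hV.trans hW.symm)).2 hsurj, hsurj⟩

namespace ExteriorAlgebra

section CommRing

variable {R M : Type*} [CommRing R] [AddCommGroup M] [Module R M]

theorem mul_ιMulti_eq_of_forall_sub_mem {W : Submodule R M} {a : ExteriorAlgebra R M}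
    (ha : ∀ w ∈ W, a * ι R w = 0) {n : ℕ} {u v : Fin n → M} (huv : ∀ j, u j - v j ∈ W) :
    a * ιMulti R n u = a * ιMulti R n v := by
  induction n generalizing a with
  | zero => rw [ιMulti_zero_apply, ιMulti_zero_apply]
  | succ n ih =>
    have hhead : a * ι R (u 0) = a * ι R (v 0) := by
      rw [← sub_eq_zero, ← mul_sub, ← map_sub]
      exact ha _ (huv 0)
    -- `ι R (v 0)` anticommutes with `ι R w`, so `a * ι R (v 0)` still annihilates `W`.
    have ha' : ∀ w ∈ W, a * ι R (v 0) * ι R w = 0 := fun w hw => by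
      rw [mul_assoc, eq_neg_of_add_eq_zero_left (ι_add_mul_swap (v 0) w), mul_neg, ← mul_assoc,
        ha w hw, zero_mul, neg_zero]
    rw [ιMulti_succ_apply, ιMulti_succ_apply, ← mul_assoc, ← mul_assoc, hhead]
    exact ih ha' fun j => huv j.succ

theorem mul_map_eq_of_forall_sub_mem {W : Submodule R M} {a : ExteriorAlgebra R M}
    (ha : ∀ w ∈ W, a * ι R w = 0) {f : M →ₗ[R] M} (hf : ∀ x, f x - x ∈ W) {n : ℕ}
    {σ : ExteriorAlgebra R M} (hσ : σ ∈ ⋀[R]^n M) : a * map f σ = a * σ := by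
  rw [← ιMulti_span_fixedDegree] at hσ
  induction hσ using Submodule.span_induction with
  | mem _ hy =>
    obtain ⟨v, rfl⟩ := hy
    rw [map_apply_ιMulti]
    exact mul_ιMulti_eq_of_forall_sub_mem ha fun j => hf (v j)
  | zero => rw [map_zero]
  | add y z _ _ hy hz => rw [map_add, mul_add, mul_add, hy, hz]
  | smul c y _ hy => rw [map_smul, mul_smul_comm, mul_smul_comm, hy]

end CommRing

theorem mul_ι_eq_zero_of_mem_exteriorPower_finrank {K M : Type*} [Field K] [AddCommGroup M]
    [Module K M] [FiniteDimensional K M] {x : ExteriorAlgebra K M}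
    (hx : x ∈ ⋀[K]^(finrank K M) M) (m : M) : x * ι K m = 0 := by
  have hm : ι K m ∈ ⋀[K]^1 M := by
    rw [exteriorPower, pow_one]
    exact LinearMap.mem_range_self _ m
  have hbot : ⋀[K]^(finrank K M + 1) M = ⊥ := by
    rw [← Submodule.finrank_eq_zero, exteriorPower.finrank_eq, Nat.choose_succ_self]
  simpa [hbot] using SetLike.GradedMul.mul_mem hx hm

theorem map_mul_map_comp_eq_of_exact {K V₁ V₂ V₃ : Type*} [Field K]
    [AddCommGroup V₁] [Module K V₁] [FiniteDimensional K V₁] [AddCommGroup V₂] [Module K V₂]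
    [AddCommGroup V₃] [Module K V₃] {i : V₁ →ₗ[K] V₂} {p : V₂ →ₗ[K] V₃}
    (hexact : LinearMap.range i = LinearMap.ker p) {s : V₃ →ₗ[K] V₂} (hs : p ∘ₗ s = .id)
    {ω : ExteriorAlgebra K V₁} (hω : ω ∈ ⋀[K]^(finrank K V₁) V₁) {n : ℕ}
    {σ : ExteriorAlgebra K V₂} (hσ : σ ∈ ⋀[K]^n V₂) :
    map i ω * map (s ∘ₗ p) σ = map i ω * σ := by
  have hsp : ∀ x, s (p x) - x ∈ LinearMap.range i := fun x => by
    rw [hexact, LinearMap.mem_ker, map_sub, ← LinearMap.comp_apply p s, hs, LinearMap.id_apply,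
      sub_self]
  have hann : ∀ w ∈ LinearMap.range i, map i ω * ι K w = 0 := by
    rintro _ ⟨x, rfl⟩
    rw [← map_apply_ι, ← map_mul, mul_ι_eq_zero_of_mem_exteriorPower_finrank hω, map_zero]
  exact mul_map_eq_of_forall_sub_mem hann hsp hσ

end ExteriorAlgebra

namespace exteriorPower

variable {R M N : Type*} [CommRing R] [AddCommGroup M] [Module R M] [AddCommGroup N] [Module R N]

@[simp]
theorem coe_map {n : ℕ} (f : M →ₗ[R] N) (x : ⋀[R]^n M) :
    (map n f x : ExteriorAlgebra R N) = ExteriorAlgebra.map f x := by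
  have := linearMap_ext (f := (⋀[R]^n N).subtype ∘ₗ map n f)
    (g := (ExteriorAlgebra.map f).toLinearMap ∘ₗ (⋀[R]^n M).subtype) (by ext; simp)
  exact LinearMap.congr_fun this x

variable (R M) in
noncomputable def mulMap (m n : ℕ) : ⋀[R]^m M ⊗[R] ⋀[R]^n M →ₗ[R] ⋀[R]^(m + n) M :=
  (Submodule.mulMap _ _).codRestrict _ fun x => by
    rw [ExteriorAlgebra.exteriorPower, pow_add, ← Submodule.mulMap_range]
    exact LinearMap.mem_range_self _ x

@[simp]
theorem coe_mulMap_tmul {m n : ℕ} (x : ⋀[R]^m M) (y : ⋀[R]^n M) :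
    (mulMap R M m n (x ⊗ₜ y) : ExteriorAlgebra R M) = x * y :=
  rfl

theorem mulMap_ιMulti_tmul_ιMulti {m n : ℕ} (u : Fin m → M) (v : Fin n → M) :
    mulMap R M m n (ιMulti R m u ⊗ₜ ιMulti R n v) = ιMulti R (m + n) (Fin.append u v) :=
  Subtype.ext (ExteriorAlgebra.ιMulti_mul_ιMulti u v)

theorem ιMulti_basis_ne_zero [Nontrivial R] {n : ℕ} (b : Basis (Fin n) R M) :
    ιMulti R n b ≠ 0 := fun h => by
  simpa [h, b.det_self] using alternatingMapLinearEquiv_apply_ιMulti b.det b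

end exteriorPower

/-- The canonical top-exterior-power isomorphism for a short exact sequence
`0 → V₁ →ⁱ V₂ →ᵖ V₃ → 0` of finite-dimensional real vector spaces: there is a linear
equivalence `e : (⋀ᵏ V₁) ⊗ (⋀ʳ V₃) ≃ ⋀^{k+r} V₂` (`k = dim V₁`, `r = dim V₃`) with
`e (ω ⊗ (⋀ʳ p) σ) = (⋀ᵏ i) ω ∧ σ` for all `ω ∈ ⋀ᵏ V₁`, `σ ∈ ⋀ʳ V₂`. Wedge products
and the induced maps on exterior powers are computed inside the exterior algebra. -/
theorem canonical_top_exterior_power_equiv_of_exact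
    {V₁ V₂ V₃ : Type*}
    [AddCommGroup V₁] [Module ℝ V₁] [FiniteDimensional ℝ V₁]
    [AddCommGroup V₂] [Module ℝ V₂] [FiniteDimensional ℝ V₂]
    [AddCommGroup V₃] [Module ℝ V₃] [FiniteDimensional ℝ V₃]
    (i : V₁ →ₗ[ℝ] V₂) (p : V₂ →ₗ[ℝ] V₃)
    (hi : Function.Injective i) (hp : Function.Surjective p)
    (hexact : LinearMap.range i = LinearMap.ker p)
    (k r : ℕ) (hk : k = Module.finrank ℝ V₁) (hr : r = Module.finrank ℝ V₃) :
    ∃ e : ((⋀[ℝ]^k V₁) ⊗[ℝ] (⋀[ℝ]^r V₃)) ≃ₗ[ℝ] (⋀[ℝ]^(k + r) V₂),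
      ∀ (ω : ⋀[ℝ]^k V₁) (σ : ⋀[ℝ]^r V₂) (τ : ⋀[ℝ]^r V₃),
        (τ : ExteriorAlgebra ℝ V₃) = ExteriorAlgebra.map p (σ : ExteriorAlgebra ℝ V₂) →
          (e (ω ⊗ₜ τ) : ExteriorAlgebra ℝ V₂) =
            ExteriorAlgebra.map i (ω : ExteriorAlgebra ℝ V₁) * (σ : ExteriorAlgebra ℝ V₂) := by
  obtain ⟨s, hs⟩ := p.exists_rightInverse_of_surjective (LinearMap.range_eq_top.2 hp)
  let b₁ := finBasisOfFinrankEq ℝ V₁ hk.symm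
  let b₃ := finBasisOfFinrankEq ℝ V₃ hr.symm
  obtain ⟨b, hb⟩ := (LinearMap.exact_iff.2 hexact.symm).exists_basis_coe_eq_append hi hs b₁ b₃
  let f : ⋀[ℝ]^k V₁ ⊗[ℝ] ⋀[ℝ]^r V₃ →ₗ[ℝ] ⋀[ℝ]^(k + r) V₂ :=
    exteriorPower.mulMap ℝ V₂ k r ∘ₗ
      TensorProduct.map (exteriorPower.map k i) (exteriorPower.map r s)
  have hf : f (exteriorPower.ιMulti ℝ k b₁ ⊗ₜ exteriorPower.ιMulti ℝ r b₃) =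
      exteriorPower.ιMulti ℝ (k + r) b := by
    simp [f, exteriorPower.mulMap_ιMulti_tmul_ιMulti, hb]
  have hbij : Function.Bijective f := by
    refine LinearMap.bijective_of_ne_zero_of_finrank_eq_one (V := ⋀[ℝ]^k V₁ ⊗[ℝ] ⋀[ℝ]^r V₃)
      (W := ⋀[ℝ]^(k + r) V₂) ?_ ?_ fun h => ?_
    · simp [finrank_tensorProduct, exteriorPower.finrank_eq, hk, hr]
    · simp [exteriorPower.finrank_eq, finrank_eq_card_basis b]
    · exact exteriorPower.ιMulti_basis_ne_zero b (hf.symm.trans (LinearMap.congr_fun h _))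
  refine ⟨.ofBijective f hbij, fun ω σ τ hτ => ?_⟩
  calc (f (ω ⊗ₜ τ) : ExteriorAlgebra ℝ V₂)
      = ExteriorAlgebra.map i ω * ExteriorAlgebra.map (s ∘ₗ p) σ := by
        simp [f, hτ, ← ExteriorAlgebra.map_comp_map]
    _ = ExteriorAlgebra.map i ω * σ :=
        ExteriorAlgebra.map_mul_map_comp_eq_of_exact hexact hs (hk ▸ ω.2) σ.2
end

section
/- (Basic functions on a submersion; used in the proof of Proposition 3.15.) Let P and M be smooth manifolds without boundary modelled on finite-dimensional real vector spaces, and let φ : P → M be a smooth (C^∞) surjective submersion, i.e. for every p ∈ P the differential mfderiv φ at p is a surjective linear map T_pP → T_{φ(p)}M. Assume that each fiber φ⁻¹{m}, m ∈ M, is connected. If f : P → ℝ is a smooth function such that for every p ∈ P the differential of f at p vanishes on the kernel of mfderiv φ at p (i.e. df(u) = 0 for all vertical tangent vectors u), then f is basic: there exists a smooth function g : M → ℝ with f = g ∘ φ. -/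
/-!
In charts around `p`, the implicit function theorem for the chart expression of `φ` (whose
derivative is onto) gives two things: a smooth local section of `φ` through `p`, and a
parametrization `γ` of the fibre through `p` by a neighbourhood in the vertical space
`ker dφ_p`. Since `dφ` kills the velocity of `γ` and `df` vanishes on vertical vectors,
`f ∘ γ` has zero derivative, so `f` is locally constant along fibres, hence constant on each
connected fibre. Then `g := f ∘ σ` for any set-theoretic section `σ` is well defined, and near
each point it agrees with `f ∘ s` for a smooth local section `s`.
-/

open Manifold Topology Filter

section

variable {X Y : Type*} [TopologicalSpace X]

theorem IsPreconnected.apply_eq_of_eventually_eq {S : Set X} (hS : IsPreconnected S) {f : X → Y}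
    (hf : ∀ x ∈ S, ∀ᶠ y in 𝓝 x, y ∈ S → f y = f x) {x y : X} (hx : x ∈ S) (hy : y ∈ S) :
    f x = f y := by
  have : PreconnectedSpace S := isPreconnected_iff_preconnectedSpace.mp hS
  have hlc : IsLocallyConstant fun z : S => f z := by
    refine (IsLocallyConstant.iff_eventually_eq _).2 fun z => ?_
    rw [nhds_subtype, eventually_comap]
    exact (hf z z.2).mono fun w hw v hv => by subst hv; exact hw v.2
  exact hlc.apply_eq_of_preconnectedSpace ⟨x, hx⟩ ⟨y, hy⟩

end

section

variable {E H : Type*} [NormedAddCommGroup E] [NormedSpace ℝ E]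
  [NormedAddCommGroup H] [NormedSpace ℝ H]

theorem eventually_eq_of_eventually_hasFDerivAt_zero {g : E → H} {z₀ : E}
    (hg : ∀ᶠ z in 𝓝 z₀, HasFDerivAt g (0 : E →L[ℝ] H) z) : ∀ᶠ z in 𝓝 z₀, g z = g z₀ := by
  obtain ⟨U, hU, hUo, hz₀⟩ := eventually_nhds_iff.1 hg
  have hlevel := hUo.isOpen_inter_preimage_of_fderiv_eq_zero
    (fun z hz => (hU z hz).differentiableAt.differentiableWithinAt) (fun z hz => (hU z hz).fderiv)
    {g z₀}
  exact mem_of_superset (hlevel.mem_nhds ⟨hz₀, rfl⟩) fun z hz => hz.2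

end

section

variable {𝕜 : Type*} [NontriviallyNormedField 𝕜]
  {EN HN : Type*} [NormedAddCommGroup EN] [NormedSpace 𝕜 EN] [TopologicalSpace HN]
  {J : ModelWithCorners 𝕜 EN HN} {N : Type*} [TopologicalSpace N] [ChartedSpace HN N]
  {EP HP : Type*} [NormedAddCommGroup EP] [NormedSpace 𝕜 EP] [TopologicalSpace HP]
  {I : ModelWithCorners 𝕜 EP HP} {P : Type*} [TopologicalSpace P] [ChartedSpace HP P]
  {EM HM : Type*} [NormedAddCommGroup EM] [NormedSpace 𝕜 EM] [TopologicalSpace HM]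
  {I' : ModelWithCorners 𝕜 EM HM} {M : Type*} [TopologicalSpace M] [ChartedSpace HM M]
  {EQ HQ : Type*} [NormedAddCommGroup EQ] [NormedSpace 𝕜 EQ] [TopologicalSpace HQ]
  {I'' : ModelWithCorners 𝕜 EQ HQ} {Q : Type*} [TopologicalSpace Q] [ChartedSpace HQ Q]

theorem hasMFDerivAt_comp_zero_of_eventually_mem_fiber {φ : P → M} {f : P → Q} {γ : N → P}
    {z : N} {m : M} (hγ : MDifferentiableAt J I γ z) (hφ : MDifferentiableAt I I' φ (γ z))
    (hf : MDifferentiableAt I I'' f (γ z))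
    (hker : ∀ u, mfderiv I I' φ (γ z) u = 0 → mfderiv I I'' f (γ z) u = 0)
    (hfiber : ∀ᶠ z' in 𝓝 z, φ (γ z') = m) : HasMFDerivAt J I'' (f ∘ γ) z 0 := by
  have hconst : φ ∘ γ =ᶠ[𝓝 z] fun _ => m := hfiber
  have hvert : mfderiv J I' (φ ∘ γ) z = 0 := by rw [hconst.mfderiv_eq, mfderiv_const]; rfl
  have hzero : (mfderiv I I'' f (γ z)).comp (mfderiv J I γ z) = 0 := by
    ext v
    refine hker _ ?_
    simpa [hvert] using (DFunLike.congr_fun (mfderiv_comp z hφ hγ) v).symm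
  simpa only [hzero] using (hf.hasMFDerivAt.comp z hγ.hasMFDerivAt)

end

theorem eventually_eq_of_extChartAt_eq {𝕜 E H M α : Type*} [NontriviallyNormedField 𝕜]
    [NormedAddCommGroup E] [NormedSpace 𝕜 E] [TopologicalSpace H] {I : ModelWithCorners 𝕜 E H}
    [TopologicalSpace M] [ChartedSpace H M] {l : Filter α} {u v : α → M} {m : M}
    (hu : Tendsto u l (𝓝 m)) (hv : Tendsto v l (𝓝 m))
    (h : ∀ᶠ a in l, extChartAt I m (u a) = extChartAt I m (v a)) : ∀ᶠ a in l, u a = v a := by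
  filter_upwards [hu (extChartAt_source_mem_nhds (I := I) m),
    hv (extChartAt_source_mem_nhds (I := I) m), h] with a hua hva ha
  exact (extChartAt I m).injOn hua hva ha

namespace ImplicitFunctionData

variable {E F G : Type*} [NormedAddCommGroup E] [NormedSpace ℝ E] [CompleteSpace E]
  [NormedAddCommGroup F] [NormedSpace ℝ F] [CompleteSpace F]
  [NormedAddCommGroup G] [NormedSpace ℝ G] [CompleteSpace G]
  (d : ImplicitFunctionData ℝ E F G) {n : WithTop ℕ∞}

theorem contDiffAt_implicitFunction_left (hl : ContDiffAt ℝ n d.leftFun d.pt)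
    (hr : ContDiffAt ℝ n d.rightFun d.pt) (hn : n ≠ 0) :
    ContDiffAt ℝ n (fun y => d.implicitFunction y (d.rightFun d.pt)) (d.leftFun d.pt) :=
  (d.contDiffAt_implicitFunction hl hr hn).comp (d.leftFun d.pt)
    (contDiffAt_id.prodMk contDiffAt_const)

theorem eventually_differentiableAt_implicitFunction_right (hl : ContDiffAt ℝ 1 d.leftFun d.pt)
    (hr : ContDiffAt ℝ 1 d.rightFun d.pt) :
    ∀ᶠ z in 𝓝 (d.rightFun d.pt), DifferentiableAt ℝ (d.implicitFunction (d.leftFun d.pt)) z := by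
  have hC1 := (d.contDiffAt_implicitFunction hl hr one_ne_zero).eventually (by simp)
  have hslice : Tendsto (fun z => (d.leftFun d.pt, z)) (𝓝 (d.rightFun d.pt))
      (𝓝 (d.prodFun d.pt)) := tendsto_const_nhds.prodMk_nhds tendsto_id
  filter_upwards [hslice.eventually hC1] with z hz
  exact (hz.differentiableAt one_ne_zero).comp z
    ((differentiableAt_const _).prodMk differentiableAt_id)

end ImplicitFunctionData

section Submersion

variable {E F : Type*} [NormedAddCommGroup E] [NormedSpace ℝ E]
  [NormedAddCommGroup F] [NormedSpace ℝ F]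
  {P M : Type*} [TopologicalSpace P] [ChartedSpace E P] [TopologicalSpace M] [ChartedSpace F M]
  {φ : P → M} {p : P} {n : WithTop ℕ∞}

theorem ContMDiffAt.contDiffAt_writtenInExtChartAt (hφ : ContMDiffAt 𝓘(ℝ, E) 𝓘(ℝ, F) n φ p) :
    ContDiffAt ℝ n (writtenInExtChartAt 𝓘(ℝ, E) 𝓘(ℝ, F) p φ) (extChartAt 𝓘(ℝ, E) p p) := by
  have h := (contMDiffAt_iff.1 hφ).2
  rwa [ModelWithCorners.range_eq_univ, contDiffWithinAt_univ] at h

theorem ContMDiffAt.hasStrictFDerivAt_writtenInExtChartAt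
    (hφ : ContMDiffAt 𝓘(ℝ, E) 𝓘(ℝ, F) n φ p) (hn : n ≠ 0) :
    HasStrictFDerivAt (writtenInExtChartAt 𝓘(ℝ, E) 𝓘(ℝ, F) p φ) (mfderiv 𝓘(ℝ, E) 𝓘(ℝ, F) φ p)
      (extChartAt 𝓘(ℝ, E) p p) := by
  have hψ := hφ.contDiffAt_writtenInExtChartAt
  refine hψ.hasStrictFDerivAt' ?_ hn
  rw [(hφ.mdifferentiableAt hn).mfderiv, ModelWithCorners.range_eq_univ, fderivWithin_univ]
  exact (hψ.differentiableAt hn).hasFDerivAt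

theorem ContMDiffAt.exists_implicitFunctionData [CompleteSpace E] [FiniteDimensional ℝ F]
    (hφ : ContMDiffAt 𝓘(ℝ, E) 𝓘(ℝ, F) n φ p) (hn : n ≠ 0) {f' : E →L[ℝ] F}
    (hφ' : HasMFDerivAt 𝓘(ℝ, E) 𝓘(ℝ, F) φ p f') (hsurj : Function.Surjective f') :
    ∃ d : ImplicitFunctionData ℝ E F f'.ker,
      (∀ x, d.leftFun x = extChartAt 𝓘(ℝ, F) (φ p) (φ ((extChartAt 𝓘(ℝ, E) p).symm x))) ∧
      d.pt = extChartAt 𝓘(ℝ, E) p p ∧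
      ContDiffAt ℝ n d.leftFun d.pt ∧ ContDiffAt ℝ n d.rightFun d.pt := by
  have hψ := hφ.hasStrictFDerivAt_writtenInExtChartAt hn
  rw [hφ'.mfderiv] at hψ
  have hker := f'.ker_closedComplemented_of_finiteDimensional_range
  exact ⟨hψ.implicitFunctionDataOfComplemented _ _ (LinearMap.range_eq_top.2 hsurj) hker,
    fun _ => rfl, rfl, hφ.contDiffAt_writtenInExtChartAt,
    (Classical.choose hker).contDiff.contDiffAt.comp _ (contDiffAt_id.sub contDiffAt_const)⟩

variable [CompleteSpace E] [FiniteDimensional ℝ F] {f' : E →L[ℝ] F}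

theorem ContMDiffAt.exists_localSection [IsManifold 𝓘(ℝ, E) n P] [IsManifold 𝓘(ℝ, F) n M]
    (hφ : ContMDiffAt 𝓘(ℝ, E) 𝓘(ℝ, F) n φ p) (hn : n ≠ 0)
    (hφ' : HasMFDerivAt 𝓘(ℝ, E) 𝓘(ℝ, F) φ p f') (hsurj : Function.Surjective f') :
    ∃ s : M → P, s (φ p) = p ∧ ContMDiffAt 𝓘(ℝ, F) 𝓘(ℝ, E) n s (φ p) ∧
      ∀ᶠ m in 𝓝 (φ p), φ (s m) = m := by
  obtain ⟨d, hleft, hpt, hl, hr⟩ := hφ.exists_implicitFunctionData hn hφ' hsurj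
  set e := extChartAt 𝓘(ℝ, E) p
  set e' := extChartAt 𝓘(ℝ, F) (φ p)
  set σ := fun y => d.implicitFunction y (d.rightFun d.pt)
  have hy₀ : d.leftFun d.pt = e' (φ p) := by
    rw [hleft, hpt, extChartAt_to_inv]
  have hσ₀ : σ (e' (φ p)) = e p := by
    rw [← hy₀, ← hpt]
    exact d.implicitFunction_apply_image.self_of_nhds
  set s := e.symm ∘ σ ∘ e'
  have hs₀ : s (φ p) = p := by simp [s, hσ₀, e]
  have hs : ContMDiffAt 𝓘(ℝ, F) 𝓘(ℝ, E) n s (φ p) := by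
    have hσ : ContMDiffAt 𝓘(ℝ, F) 𝓘(ℝ, E) n σ (e' (φ p)) :=
      (hy₀ ▸ d.contDiffAt_implicitFunction_left hl hr hn).contMDiffAt
    have he : ContMDiffAt 𝓘(ℝ, E) 𝓘(ℝ, E) n e.symm (σ (e' (φ p))) := by
      rw [hσ₀]
      exact (contMDiffOn_extChartAt_symm p).contMDiffAt
        (extChartAt_target_mem_nhds' (mem_extChartAt_target p))
    exact he.comp (φ p) (hσ.comp (φ p) contMDiffAt_extChartAt)
  refine ⟨s, hs₀, hs, ?_⟩
  have hφs : Tendsto (φ ∘ s) (𝓝 (φ p)) (𝓝 (φ p)) := by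
    have hst : Tendsto s (𝓝 (φ p)) (𝓝 p) := by simpa only [hs₀] using hs.continuousAt.tendsto
    exact hφ.continuousAt.tendsto.comp hst
  have hslice : Tendsto (fun m => (e' m, d.rightFun d.pt)) (𝓝 (φ p)) (𝓝 (d.prodFun d.pt)) := by
    rw [d.prodFun_apply, hy₀]
    exact (continuousAt_extChartAt (φ p)).tendsto.prodMk_nhds tendsto_const_nhds
  refine eventually_eq_of_extChartAt_eq (I := 𝓘(ℝ, F)) hφs tendsto_id ?_
  filter_upwards [hslice.eventually d.leftFun_implicitFunction] with m hm
  rwa [hleft] at hm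

theorem ContMDiffAt.exists_fiberParametrization [IsManifold 𝓘(ℝ, E) 1 P]
    (hφ : ContMDiffAt 𝓘(ℝ, E) 𝓘(ℝ, F) 1 φ p) (hφ' : HasMFDerivAt 𝓘(ℝ, E) 𝓘(ℝ, F) φ p f')
    (hsurj : Function.Surjective f') :
    ∃ (γ : f'.ker → P) (κ : P → f'.ker), ContinuousAt κ p ∧ γ (κ p) = p ∧
      (∀ᶠ z in 𝓝 (κ p), MDifferentiableAt 𝓘(ℝ, f'.ker) 𝓘(ℝ, E) γ z ∧ φ (γ z) = φ p) ∧
      ∀ᶠ q in 𝓝 p, φ q = φ p → γ (κ q) = q := by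
  obtain ⟨d, hleft, hpt, hl, hr⟩ := hφ.exists_implicitFunctionData one_ne_zero hφ' hsurj
  set e := extChartAt 𝓘(ℝ, E) p
  have hΛ := d.eventually_differentiableAt_implicitFunction_right hl hr
  set Λ := d.implicitFunction (d.leftFun d.pt)
  have hpt' : e.symm d.pt = p := by rw [hpt, extChartAt_to_inv]
  have hy₀ : d.leftFun d.pt = extChartAt 𝓘(ℝ, F) (φ p) (φ p) := by rw [hleft, hpt']
  have hΛ₀ : Λ (d.rightFun d.pt) = d.pt := d.implicitFunction_apply_image.self_of_nhds
  have hΛt : Tendsto Λ (𝓝 (d.rightFun d.pt)) (𝓝 d.pt) := by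
    simpa only [hΛ₀] using hΛ.self_of_nhds.continuousAt.tendsto
  have hγt : Tendsto (e.symm ∘ Λ) (𝓝 (d.rightFun d.pt)) (𝓝 p) := by
    have he := (continuousAt_extChartAt_symm (I := 𝓘(ℝ, E)) p).tendsto
    rw [← hpt, hpt'] at he
    exact he.comp hΛt
  have hslice : Tendsto (fun z => (d.leftFun d.pt, z)) (𝓝 (d.rightFun d.pt))
      (𝓝 (d.prodFun d.pt)) := tendsto_const_nhds.prodMk_nhds tendsto_id
  have hfiber : ∀ᶠ z in 𝓝 (d.rightFun d.pt), φ (e.symm (Λ z)) = φ p := by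
    refine eventually_eq_of_extChartAt_eq (I := 𝓘(ℝ, F)) (hφ.continuousAt.tendsto.comp hγt)
      tendsto_const_nhds ?_
    filter_upwards [hslice.eventually d.leftFun_implicitFunction] with z hz
    rw [← hy₀, ← hleft]
    exact hz
  have he : Tendsto e (𝓝 p) (𝓝 d.pt) := hpt ▸ (continuousAt_extChartAt p).tendsto
  refine ⟨e.symm ∘ Λ, fun q => d.rightFun (e q),
    (hpt ▸ hr.continuousAt).comp (continuousAt_extChartAt p), ?_, ?_, ?_⟩
  · show e.symm (Λ (d.rightFun (e p))) = p
    rw [← hpt, hΛ₀, hpt']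
  · show ∀ᶠ z in 𝓝 (d.rightFun (e p)), _
    rw [← hpt]
    have htarget := extChartAt_target_mem_nhds' (hpt ▸ mem_extChartAt_target (I := 𝓘(ℝ, E)) p)
    filter_upwards [hΛ, hΛt.eventually htarget, hfiber] with z hz hze hzφ
    refine ⟨MDifferentiableAt.comp z ?_ hz.mdifferentiableAt, hzφ⟩
    exact ((contMDiffOn_extChartAt_symm p).contMDiffAt
      (extChartAt_target_mem_nhds' hze)).mdifferentiableAt one_ne_zero
  · filter_upwards [extChartAt_source_mem_nhds (I := 𝓘(ℝ, E)) p,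
      he.eventually d.leftFun_eq_iff_implicitFunction] with q hq hiff hφq
    have hq' : d.leftFun (e q) = d.leftFun d.pt := by
      rw [hleft, hleft, e.left_inv hq, hpt', hφq]
    exact (congrArg e.symm (hiff.1 hq')).trans (e.left_inv hq)

end Submersion

theorem eventually_eq_on_fiber_of_ker_mfderiv_le
    {E F H : Type*} [NormedAddCommGroup E] [NormedSpace ℝ E] [CompleteSpace E]
    [NormedAddCommGroup F] [NormedSpace ℝ F] [FiniteDimensional ℝ F]
    [NormedAddCommGroup H] [NormedSpace ℝ H]
    {P M : Type*} [TopologicalSpace P] [ChartedSpace E P] [IsManifold 𝓘(ℝ, E) 1 P]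
    [TopologicalSpace M] [ChartedSpace F M] {φ : P → M} {f : P → H} {p : P} {f' : E →L[ℝ] F}
    (hφ : ContMDiff 𝓘(ℝ, E) 𝓘(ℝ, F) 1 φ) (hφ' : HasMFDerivAt 𝓘(ℝ, E) 𝓘(ℝ, F) φ p f')
    (hsurj : Function.Surjective f') (hf : MDifferentiable 𝓘(ℝ, E) 𝓘(ℝ, H) f)
    (hdf : ∀ (q : P) (u : TangentSpace 𝓘(ℝ, E) q),
      mfderiv 𝓘(ℝ, E) 𝓘(ℝ, F) φ q u = 0 → mfderiv 𝓘(ℝ, E) 𝓘(ℝ, H) f q u = 0) :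
    ∀ᶠ q in 𝓝 p, φ q = φ p → f q = f p := by
  obtain ⟨γ, κ, hκ, hγκ, hγ, hparam⟩ := (hφ p).exists_fiberParametrization hφ' hsurj
  have hderiv : ∀ᶠ z in 𝓝 (κ p), HasFDerivAt (f ∘ γ) (0 : f'.ker →L[ℝ] H) z := by
    filter_upwards [hγ.eventually_nhds] with z hz
    refine hasMFDerivAt_iff_hasFDerivAt.1 <| hasMFDerivAt_comp_zero_of_eventually_mem_fiber
      hz.self_of_nhds.1 ((hφ _).mdifferentiableAt one_ne_zero) (hf _) (hdf _)
      (hz.mono fun _ h => h.2)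
  have hconst := hκ.tendsto.eventually (eventually_eq_of_eventually_hasFDerivAt_zero hderiv)
  filter_upwards [hparam, hconst] with q hq hqγ hφq
  calc f q = f (γ (κ q)) := by rw [hq hφq]
    _ = f (γ (κ p)) := hqγ
    _ = f p := by rw [hγκ]

/-- Basic functions on a surjective submersion with connected fibers: if `φ : P → M` is a
smooth surjective submersion between smooth manifolds with connected fibers, and `f : P → ℝ`
is a smooth function whose differential vanishes on the kernel of the differential of `φ`
(the vertical tangent vectors), then `f` is basic: `f = g ∘ φ` for a smooth `g : M → ℝ`. -/
theorem basic_function_of_surjective_submersion_connected_fibers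
    {EP : Type*} [NormedAddCommGroup EP] [NormedSpace ℝ EP] [FiniteDimensional ℝ EP]
    {EM : Type*} [NormedAddCommGroup EM] [NormedSpace ℝ EM] [FiniteDimensional ℝ EM]
    {P : Type*} [TopologicalSpace P] [ChartedSpace EP P]
    [IsManifold 𝓘(ℝ, EP) (⊤ : ℕ∞) P]
    {M : Type*} [TopologicalSpace M] [ChartedSpace EM M]
    [IsManifold 𝓘(ℝ, EM) (⊤ : ℕ∞) M]
    (φ : P → M) (hφ : ContMDiff 𝓘(ℝ, EP) 𝓘(ℝ, EM) (⊤ : ℕ∞) φ)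
    (hsurj : Function.Surjective φ)
    (hsub : ∀ p : P, Function.Surjective (mfderiv 𝓘(ℝ, EP) 𝓘(ℝ, EM) φ p))
    (hfib : ∀ m : M, IsConnected (φ ⁻¹' {m}))
    (f : P → ℝ) (hf : ContMDiff 𝓘(ℝ, EP) 𝓘(ℝ, ℝ) (⊤ : ℕ∞) f)
    (hdf : ∀ (p : P) (u : TangentSpace 𝓘(ℝ, EP) p),
      mfderiv 𝓘(ℝ, EP) 𝓘(ℝ, EM) φ p u = 0 →
        mfderiv 𝓘(ℝ, EP) 𝓘(ℝ, ℝ) f p u = 0) :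
    ∃ g : M → ℝ, ContMDiff 𝓘(ℝ, EM) 𝓘(ℝ, ℝ) (⊤ : ℕ∞) g ∧ f = g ∘ φ := by
  have hφ' : ∀ p, HasMFDerivAt 𝓘(ℝ, EP) 𝓘(ℝ, EM) φ p (mfderiv 𝓘(ℝ, EP) 𝓘(ℝ, EM) φ p) :=
    fun p => (hφ.mdifferentiable (by simp)).mdifferentiableAt.hasMFDerivAt
  have hlocal : ∀ p, ∀ᶠ q in 𝓝 p, φ q = φ p → f q = f p := fun p =>
    eventually_eq_on_fiber_of_ker_mfderiv_le (hφ.of_le (by simp)) (hφ' p) (hsub p)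
      (hf.mdifferentiable (by simp)) hdf
  have hconst : ∀ a b, φ a = φ b → f a = f b := fun a b hab =>
    (hfib (φ b)).isPreconnected.apply_eq_of_eventually_eq
      (fun x hx => (hlocal x).mono fun y hy hyS => hy (hyS.trans hx.symm)) hab rfl
  refine ⟨f ∘ Function.surjInv hsurj, fun m => ?_,
    funext fun q => hconst _ _ (Function.surjInv_eq hsurj (φ q)).symm⟩
  obtain ⟨p, rfl⟩ := hsurj m
  obtain ⟨s, -, hs, hφs⟩ := (hφ p).exists_localSection (by simp) (hφ' p) (hsub p)
  refine ((hf (s (φ p))).comp _ hs).congr_of_eventuallyEq ?_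
  filter_upwards [hφs] with m hm
  exact hconst _ _ (by rw [Function.surjInv_eq hsurj, hm])
end
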